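/- Every indecomposable complex X in C_{η+2}(proj Λ) satisfies X^1 = 0 or X^{η+2} = 0. -/

import Mathlib

open CategoryTheory CategoryTheory.Limits ZeroObject

noncomputable section

namespace Paper

/-- The ambient category: cochain complexes of right `Λ`-modules indexed by `ℤ`. -/
abbrev Amb (Λ : Type) [Ring Λ] := CochainComplex (ModuleCat.{0} Λᵐᵒᵖ) ℤ

variable {Λ : Type} [Ring Λ]

/-- All cells are finitely generated projective right `Λ`-modules. -/
def ProjCells (X : Amb Λ) : Prop :=
  ∀ i : ℤ, Module.Finite Λᵐᵒᵖ (X.X i) ∧ Module.Projective Λᵐᵒᵖ (X.X i)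

/-- The complex is supported in the window `[a, b]`. -/
def Supp (a b : ℤ) (X : Amb Λ) : Prop :=
  ∀ i : ℤ, (i < a ∨ b < i) → IsZero (X.X i)

/-- Object of the category `C_{[a,b]}(proj Λ)` of complexes of finitely generated
projective modules concentrated in the window `[a, b]`.  (The category
`C_n(proj Λ)` of the paper corresponds to the window `[1, n]`; a window `[a, b]`
corresponds to `C_{b-a+1}(proj Λ)` after the canonical reindexing.) -/
def InC (a b : ℤ) (X : Amb Λ) : Prop := Supp a b X ∧ ProjCells X

def IsSect {X Y : Amb Λ} (f : X ⟶ Y) : Prop := ∃ h : Y ⟶ X, f ≫ h = 𝟙 X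

def IsRetr {X Y : Amb Λ} (f : X ⟶ Y) : Prop := ∃ h : Y ⟶ X, h ≫ f = 𝟙 Y

/-- `f` is irreducible in `C_{[a,b]}(proj Λ)`. -/
def Irred (a b : ℤ) {X Y : Amb Λ} (f : X ⟶ Y) : Prop :=
  ¬ IsSect f ∧ ¬ IsRetr f ∧
    ∀ (W : Amb Λ), InC a b W → ∀ (g : X ⟶ W) (h : W ⟶ Y),
      g ≫ h = f → IsRetr h ∨ IsSect g

/-- Indecomposable complex. -/
def Indec (X : Amb Λ) : Prop :=
  ¬ IsZero X ∧ ∀ (A B : Amb Λ), (X ≅ A ⊞ B) → IsZero A ∨ IsZero B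

/-- A conflation: in every degree a split short exact sequence. -/
def DegSplit {X Y Z : Amb Λ} (f : X ⟶ Y) (g : Y ⟶ Z) : Prop :=
  ∀ j : ℤ, ∃ w : f.f j ≫ g.f j = 0,
    Nonempty (ShortComplex.mk (f.f j) (g.f j) w).Splitting

/-- Minimal left almost split morphism in `C_{[a,b]}(proj Λ)`. -/
def MinLeftAS (a b : ℤ) {X Y : Amb Λ} (f : X ⟶ Y) : Prop :=
  ¬ IsSect f ∧
    (∀ (W : Amb Λ), InC a b W → ∀ u : X ⟶ W, ¬ IsSect u → ∃ v : Y ⟶ W, f ≫ v = u) ∧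
    (∀ u : Y ⟶ Y, f ≫ u = f → IsIso u)

/-- Minimal right almost split morphism in `C_{[a,b]}(proj Λ)`. -/
def MinRightAS (a b : ℤ) {Y Z : Amb Λ} (g : Y ⟶ Z) : Prop :=
  ¬ IsRetr g ∧
    (∀ (W : Amb Λ), InC a b W → ∀ u : W ⟶ Z, ¬ IsRetr u → ∃ v : W ⟶ Y, v ≫ g = u) ∧
    (∀ u : Y ⟶ Y, u ≫ g = g → IsIso u)

/-- Almost split sequence in `C_{[a,b]}(proj Λ)`. -/
def AlmostSplit (a b : ℤ) {X Y Z : Amb Λ} (f : X ⟶ Y) (g : Y ⟶ Z) : Prop :=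
  DegSplit f g ∧ MinLeftAS a b f ∧ MinRightAS a b g

/-- `X` (supported in a window starting at `a`) can be extended to the left. -/
def ExtLeft (a : ℤ) (X : Amb Λ) : Prop :=
  ∃ P : ModuleCat.{0} Λᵐᵒᵖ, Module.Finite Λᵐᵒᵖ P ∧ Module.Projective Λᵐᵒᵖ P ∧
    ∃ δ : P ⟶ X.X a, δ ≠ 0 ∧ δ ≫ X.d a (a + 1) = 0

/-- `X` (supported in a window ending at `b`) can be extended to the right. -/
def ExtRight (b : ℤ) (X : Amb Λ) : Prop :=
  ∃ P : ModuleCat.{0} Λᵐᵒᵖ, Module.Finite Λᵐᵒᵖ P ∧ Module.Projective Λᵐᵒᵖ P ∧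
    ∃ δ : X.X b ⟶ P, δ ≠ 0 ∧ X.d (b - 1) b ≫ δ = 0

/-- Bounded complex. -/
def BddCplx (X : Amb Λ) : Prop := ∃ a b : ℤ, Supp a b X

/-- Contractible complex, i.e. zero in the homotopy category. -/
def Contractible (X : Amb Λ) : Prop := Nonempty (Homotopy (𝟙 X) 0)

/-- Indecomposable nonzero object of `K^b(proj Λ)`. -/
def HIndec (X : Amb Λ) : Prop :=
  ¬ Contractible X ∧
    ∀ (A B : Amb Λ), ProjCells A → BddCplx A → ProjCells B → BddCplx B →
      Nonempty (HomotopyEquiv X (A ⊞ B)) → Contractible A ∨ Contractible B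

/-- The candidate lengths of `X` as an object of `K^b(proj Λ)`. -/
def lenSet (X : Amb Λ) : Set ℕ :=
  {d | ∃ (Y : Amb Λ) (r s : ℤ), r ≤ s ∧ Nonempty (HomotopyEquiv X Y) ∧
        ProjCells Y ∧ Supp r s Y ∧ d = (s - r).toNat}

/-- `ℓ(X)`. -/
def len (X : Amb Λ) : ℕ := sInf (lenSet X)

/-- `η` is the strong global dimension of `Λ`. -/
def IsSGdim (Λ : Type) [Ring Λ] (η : ℕ) : Prop :=
  IsGreatest {d : ℕ | ∃ X : Amb Λ, ProjCells X ∧ BddCplx X ∧ HIndec X ∧ len X = d} η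

/-- Brutal truncation of a complex to the set of degrees satisfying `P`. -/
def chop (P : ℤ → Prop) [DecidablePred P] (X : Amb Λ) : Amb Λ where
  X i := if P i then X.X i else 0
  d i j :=
    if hi : P i then
      if hj : P j then
        eqToHom (if_pos hi) ≫ X.d i j ≫ eqToHom (if_pos hj).symm
      else 0
    else 0
  shape i j h := by
    by_cases hi : P i
    · by_cases hj : P j
      · simp [hi, hj, X.shape i j h]
      · simp [hi, hj]
    · simp [hi]
  d_comp_d' i j k hij hjk := by
    by_cases hi : P i <;> by_cases hj : P j <;> by_cases hk : P k <;>
      simp [hi, hj, hk]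

/-- Brutal truncation of a chain map. -/
def chopMap (P : ℤ → Prop) [DecidablePred P] {X Y : Amb Λ} (f : X ⟶ Y) :
    chop P X ⟶ chop P Y where
  f i :=
    if h : P i then eqToHom (if_pos h) ≫ f.f i ≫ eqToHom (if_pos h).symm
    else 0
  comm' i j hij := by
    by_cases hi : P i <;> by_cases hj : P j <;>
      simp [chop, hi, hj] <;> rfl

/-- `E_{[a,b]}`-projective complex (lifting against proper epimorphisms). -/
def EProj (a b : ℤ) (P : Amb Λ) : Prop :=
  ∀ (W₁ W₂ : Amb Λ), InC a b W₁ → InC a b W₂ → ∀ v : W₁ ⟶ W₂,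
    (∀ j : ℤ, Epi (v.f j)) → ∀ f : P ⟶ W₂, ∃ g : P ⟶ W₁, g ≫ v = f

/-- `E_{[a,b]}`-injective complex (extending along proper monomorphisms). -/
def EInj (a b : ℤ) (I : Amb Λ) : Prop :=
  ∀ (W₁ W₂ : Amb Λ), InC a b W₁ → InC a b W₂ → ∀ v : W₁ ⟶ W₂,
    (∀ j : ℤ, Mono (v.f j)) → ∀ f : W₁ ⟶ I, ∃ g : W₂ ⟶ I, v ≫ g = f

/-!
The endomorphism ring of an indecomposable complex in `C_n(proj Λ)` is a finite-dimensional
algebra without nontrivial idempotents, hence local by Fitting's lemma.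

If `X` is contractible with contraction `h`, the null-homotopic endomorphism built from
`h^{2,1}` alone is the identity in degree `1` and vanishes outside degrees `1, 2`; since it or
its complement is invertible, `X¹ = 0` or `X^{η+2} = 0`.

Otherwise `X` stays indecomposable in `K^b(proj Λ)`, so `ℓ(X) ≤ η`, and locality makes every
homotopy equivalence `X ⟶ Y` a split monomorphism of complexes. Hence `X` vanishes wherever a
shortest representative `Y` does, and `Y`, of length at most `η`, cannot reach from degree `1` to
degree `η + 2`.
-/

end Paper

theorem isUnit_or_isNilpotent_of_forall_isIdempotentElem {K S : Type*} [Field K] [Ring S]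
    [Algebra K S] [FiniteDimensional K S] (h : ∀ e : S, IsIdempotentElem e → e = 0 ∨ e = 1)
    (x : S) : IsUnit x ∨ IsNilpotent x := by
  have : IsArtinianRing S := .of_finite K S
  obtain ⟨n, hcompl, hn⟩ := ((LinearMap.mulRight K x).eventually_isCompl_ker_pow_range_pow.and
    (Filter.eventually_ge_atTop 1)).exists
  rw [LinearMap.pow_mulRight] at hcompl
  obtain ⟨a, ha, b, ⟨c, rfl⟩, hab⟩ := Submodule.mem_sup.1 (hcompl.sup_eq_top ▸ Submodule.mem_top :
    (1 : S) ∈ _ ⊔ _)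
  simp only [LinearMap.mem_ker, LinearMap.mulRight_apply] at ha hab
  have hb : c * x ^ n = 1 - a := eq_sub_of_add_eq' hab
  -- the Fitting decomposition splits `S` into two left ideals, and `a * (1 - a)` lies in both
  have hidem : IsIdempotentElem a := by
    have hmem : a * (c * x ^ n) ∈ (LinearMap.mulRight K (x ^ n)).ker ⊓
        (LinearMap.mulRight K (x ^ n)).range := by
      refine ⟨?_, ⟨a * c, by simp [mul_assoc]⟩⟩
      change a * (c * x ^ n) * x ^ n = 0
      rw [hb, mul_sub, mul_one, sub_mul, mul_assoc, ha, mul_zero, sub_zero]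
    rw [hcompl.disjoint.eq_bot, Submodule.mem_bot, hb, mul_sub, mul_one, sub_eq_zero] at hmem
    exact hmem.symm
  rcases h a hidem with rfl | rfl
  · rw [zero_add] at hab
    exact .inl ((isUnit_pow_iff (by omega)).1 (.of_mul_eq_one_right c hab))
  · exact .inr ⟨n, by simpa using ha⟩

theorem IsLocalRing.of_finiteDimensional_of_forall_isIdempotentElem (K : Type*) {S : Type*}
    [Field K] [Ring S] [Nontrivial S] [Algebra K S] [FiniteDimensional K S]
    (h : ∀ e : S, IsIdempotentElem e → e = 0 ∨ e = 1) : IsLocalRing S :=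
  .of_isUnit_or_isUnit_one_sub_self fun x =>
    (isUnit_or_isNilpotent_of_forall_isIdempotentElem (K := K) h x).imp_right
      IsNilpotent.isUnit_one_sub

namespace CategoryTheory

theorem Functor.isLocalRing_end_obj {C D : Type*} [Category C] [Category D] [Preadditive C]
    [Preadditive D] (F : C ⥤ D) [F.Additive] [F.Full] (X : C) [IsLocalRing (End X)]
    [Nontrivial (End (F.obj X))] : IsLocalRing (End (F.obj X)) :=
  .of_isUnit_or_isUnit_one_sub_self fun b => by
    obtain ⟨a, rfl⟩ : ∃ a : End X, F.mapEnd X a = b := F.map_surjective b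
    have hsub : 1 - F.mapEnd X a = F.mapEnd X (1 - a) := by
      change 𝟙 _ - F.map a = F.map (𝟙 X - a.asHom)
      rw [F.map_sub, F.map_id]
    rw [hsub]
    exact (IsLocalRing.isUnit_or_isUnit_of_add_one (add_sub_cancel a 1)).imp
      (IsUnit.map (F.mapEnd X)) (IsUnit.map (F.mapEnd X))

theorem Limits.isZero_or_isZero_of_iso_biprod {C : Type*} [Category C] [Preadditive C]
    {X A B : C} [HasBinaryBiproduct A B] [IsLocalRing (End X)] (e : X ≅ A ⊞ B) :
    IsZero A ∨ IsZero B := by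
  have htotal : End.of (e.hom ≫ biprod.fst ≫ biprod.inl ≫ e.inv) +
      End.of (e.hom ≫ biprod.snd ≫ biprod.inr ≫ e.inv) = 1 := by
    have := e.hom ≫= biprod.total =≫ e.inv
    simp only [Preadditive.comp_add, Preadditive.add_comp, Category.assoc, Category.id_comp,
      e.hom_inv_id] at this
    exact this
  rcases IsLocalRing.isUnit_or_isUnit_of_add_one htotal with h | h <;>
    rw [isUnit_iff_isIso] at h
  · refine .inr (IsZero.of_mono_eq_zero (biprod.inr : B ⟶ A ⊞ B) ?_)
    rw [← cancel_mono (e.inv ≫ e.hom ≫ biprod.fst ≫ biprod.inl ≫ e.inv)]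
    simp
  · refine .inl (IsZero.of_mono_eq_zero (biprod.inl : A ⟶ A ⊞ B) ?_)
    rw [← cancel_mono (e.inv ≫ e.hom ≫ biprod.snd ≫ biprod.inr ≫ e.inv)]
    simp

end CategoryTheory

namespace Paper

variable {Λ : Type} [Ring Λ]

theorem Indec.eq_zero_or_eq_one_of_isIdempotentElem {X : Amb Λ} (hX : Indec X) {e : End X}
    (he : IsIdempotentElem e) : e = 0 ∨ e = 1 := by
  obtain ⟨A, sA, rA, hsrA, hrsA⟩ := IsIdempotentComplete.idempotents_split X e he
  obtain ⟨B, sB, rB, hsrB, hrsB⟩ :=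
    IsIdempotentComplete.idempotents_split X (1 - e) he.one_sub
  have he₁ : e.asHom ≫ (𝟙 X - e.asHom) = 0 := by
    rw [Preadditive.comp_sub, Category.comp_id]
    exact sub_eq_zero.2 (Eq.symm he)
  have he₂ : (𝟙 X - e.asHom) ≫ e.asHom = 0 := by
    rw [Preadditive.sub_comp, Category.id_comp]
    exact sub_eq_zero.2 (Eq.symm he)
  have hAB : sA ≫ rB = 0 := by
    calc sA ≫ rB = sA ≫ (rA ≫ sA) ≫ (rB ≫ sB) ≫ rB := by
          simp only [Category.assoc, reassoc_of% hsrA, hsrB, Category.comp_id]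
      _ = 0 := by
          rw [hrsA, hrsB]
          simp [End.one_def, reassoc_of% he₁]
  have hBA : sB ≫ rA = 0 := by
    calc sB ≫ rA = sB ≫ (rB ≫ sB) ≫ (rA ≫ sA) ≫ rA := by
          simp only [Category.assoc, reassoc_of% hsrB, hsrA, Category.comp_id]
      _ = 0 := by
          rw [hrsA, hrsB]
          simp [End.one_def, reassoc_of% he₂]
  let b : BinaryBicone A B := ⟨X, rA, rB, sA, sB, hsrA, hAB, hBA, hsrB⟩
  have htotal : b.fst ≫ b.inl + b.snd ≫ b.inr = 𝟙 b.pt := by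
    simp [b, hrsA, hrsB, End.one_def]
  rcases hX.2 A B (biprod.uniqueUpToIso A B (isBinaryBilimitOfTotal b htotal)) with h | h
  · left
    rw [← hrsA, h.eq_of_tgt rA 0, zero_comp]
  · right
    rw [← sub_eq_zero, ← neg_sub, ← hrsB, h.eq_of_tgt rB 0, zero_comp, neg_zero]

section FiniteDimensional

variable (K : Type) [Field K] [Algebra K Λ] [FiniteDimensional K Λ]

open scoped ModuleCat in
theorem finiteDimensional_hom (M N : ModuleCat.{0} Λᵐᵒᵖ) [Module.Finite Λᵐᵒᵖ M]
    [Module.Finite Λᵐᵒᵖ N] : FiniteDimensional K (M ⟶ N) := by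
  have : FiniteDimensional K M := Module.Finite.trans Λᵐᵒᵖ M
  have : FiniteDimensional K N := Module.Finite.trans Λᵐᵒᵖ N
  exact .of_injective
    (LinearMap.restrictScalarsₗ K Λᵐᵒᵖ M N K ∘ₗ ModuleCat.homLinearEquiv.toLinearMap)
    ((LinearMap.restrictScalars_injective K).comp ModuleCat.homLinearEquiv.injective)

theorem finiteDimensional_end {a b : ℤ} {X : Amb Λ} (hX : InC a b X) :
    FiniteDimensional K (End X) := by
  have (i : Finset.Icc a b) : FiniteDimensional K (X.X i ⟶ X.X i) :=
    have := (hX.2 i).1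
    finiteDimensional_hom K _ _
  let cells : End X →ₗ[K] ∀ i : Finset.Icc a b, X.X i ⟶ X.X i :=
    { toFun f i := f.f i
      map_add' _ _ := rfl
      map_smul' _ _ := rfl }
  refine .of_injective cells fun f g hfg => HomologicalComplex.hom_ext _ _ fun i => ?_
  by_cases hi : i ∈ Finset.Icc a b
  · exact congrFun hfg ⟨i, hi⟩
  · exact (hX.1 i (by grind)).eq_of_src _ _

end FiniteDimensional

theorem Indec.isLocalRing_end (K : Type) [Field K] [Algebra K Λ] [FiniteDimensional K Λ]
    {a b : ℤ} {X : Amb Λ} (hX : InC a b X) (hind : Indec X) : IsLocalRing (End X) :=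
  have := finiteDimensional_end K hX
  have : Nontrivial (End X) := ⟨⟨1, 0, fun h => hind.1 ((IsZero.iff_id_eq_zero X).2 h)⟩⟩
  .of_finiteDimensional_of_forall_isIdempotentElem K fun _ =>
    hind.eq_zero_or_eq_one_of_isIdempotentElem

theorem contractible_iff_isZero (X : Amb Λ) :
    Contractible X ↔ IsZero ((HomotopyCategory.quotient _ _).obj X) :=
  (HomotopyCategory.isZero_quotient_obj_iff X).symm

section LocalEnd

variable {X : Amb Λ} [IsLocalRing (End X)]

theorem isSplitMono_hom_of_not_contractible (hX : ¬Contractible X) {Y : Amb Λ}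
    (ε : HomotopyEquiv X Y) : IsSplitMono ε.hom := by
  obtain h | h := IsLocalRing.isUnit_or_isUnit_of_add_one
    (add_sub_cancel (End.of (ε.hom ≫ ε.inv)) 1) <;> rw [isUnit_iff_isIso] at h
  · exact .mk' ⟨ε.inv ≫ inv (ε.hom ≫ ε.inv), by rw [← Category.assoc]; exact IsIso.hom_inv_id _⟩
  · refine absurd ((contractible_iff_isZero X).2 (IsZero.of_mono_eq_zero
      ((HomotopyCategory.quotient _ _).map (𝟙 X - ε.hom ≫ ε.inv)) ?_)) hX
    exact HomotopyCategory.eq_of_homotopy _ _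
      (Homotopy.equivSubZero ε.homotopyHomInvId.symm) |>.trans (Functor.map_zero _ _ _)

theorem hIndec_of_not_contractible (hX : ¬Contractible X) : HIndec X := by
  refine ⟨hX, fun A B _ _ _ _ ⟨ε⟩ => ?_⟩
  have : Nontrivial (End ((HomotopyCategory.quotient _ _).obj X)) :=
    ⟨⟨1, 0, fun h => hX ((contractible_iff_isZero X).2 ((IsZero.iff_id_eq_zero _).2 h))⟩⟩
  have := (HomotopyCategory.quotient (ModuleCat.{0} Λᵐᵒᵖ) (ComplexShape.up ℤ)).isLocalRing_end_obj X
  have := preservesBinaryBiproducts_of_preservesBiproducts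
    (HomotopyCategory.quotient (ModuleCat.{0} Λᵐᵒᵖ) (ComplexShape.up ℤ))
  exact (isZero_or_isZero_of_iso_biprod (HomotopyCategory.isoOfHomotopyEquiv ε ≪≫
    (HomotopyCategory.quotient _ _).mapBiprod A B)).imp
    (contractible_iff_isZero A).2 (contractible_iff_isZero B).2

theorem Contractible.isZero_X_or_isZero_X (hc : Contractible X) {n : ℤ}
    (hn : IsZero (X.X (n - 1))) {i : ℤ} (hi₀ : i ≠ n) (hi₁ : i ≠ n + 1) :
    IsZero (X.X n) ∨ IsZero (X.X i) := by
  obtain ⟨h⟩ := hc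
  have hprev (p : ℤ) : (ComplexShape.up ℤ).Rel (p - 1) p := by simp
  have hnext (p : ℤ) : (ComplexShape.up ℤ).Rel p (p + 1) := rfl
  let e : X ⟶ X := Homotopy.nullHomotopicMap fun p q => if p = n + 1 then h.hom p q else 0
  have he_n : e.f n = 𝟙 _ := by
    have := h.comm n
    rw [dNext_eq _ (hnext n), prevD_eq _ (hprev n), hn.eq_of_src (X.d (n - 1) n) 0] at this
    rw [Homotopy.nullHomotopicMap_f (hprev n) (hnext n)]
    simpa using this.symm
  have he_i : e.f i = 0 := by
    rw [Homotopy.nullHomotopicMap_f (hprev i) (hnext i)]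
    simp [hi₀, hi₁]
  obtain h | h := IsLocalRing.isUnit_or_isUnit_of_add_one (add_sub_cancel (End.of e) 1) <;>
    rw [isUnit_iff_isIso] at h
  · exact .inr (IsZero.of_mono_eq_zero (e.f i) he_i)
  · exact .inl (IsZero.of_mono_eq_zero ((𝟙 X - e).f n) (by simp [he_n]))

end LocalEnd

theorem Supp.of_isSplitMono {a b : ℤ} {X Y : Amb Λ} (f : X ⟶ Y) [IsSplitMono f]
    (hY : Supp a b Y) : Supp a b X :=
  fun i hi => (hY i hi).of_mono (f.f i)

theorem exists_homotopyEquiv_supp_len {a b : ℤ} {X : Amb Λ} (hX : InC a b X) (hab : a ≤ b) :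
    ∃ (Y : Amb Λ) (r s : ℤ), Nonempty (HomotopyEquiv X Y) ∧ Supp r s Y ∧ s - r = len X := by
  obtain ⟨Y, r, s, hrs, hε, -, hY, hlen⟩ := Nat.sInf_mem (s := lenSet X)
    ⟨_, X, a, b, hab, ⟨HomotopyEquiv.refl X⟩, hX.2, hX.1, rfl⟩
  exact ⟨Y, r, s, hε, hY, by rw [len, hlen]; omega⟩

theorem statement2_general (K : Type) [Field K]
    (Λ : Type) [Ring Λ] [Algebra K Λ] [FiniteDimensional K Λ]
    (η : ℕ) (hη : 1 ≤ η) (hsgd : IsSGdim Λ η)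
    (X : Amb Λ) (hX : InC 1 ((η : ℤ) + 2) X) (hind : Indec X) :
    IsZero (X.X 1) ∨ IsZero (X.X ((η : ℤ) + 2)) := by
  have := hind.isLocalRing_end K hX
  by_cases hc : Contractible X
  · exact hc.isZero_X_or_isZero_X (hX.1 _ (by omega)) (by omega) (by omega)
  obtain ⟨Y, r, s, ⟨ε⟩, hY, hlen⟩ := exists_homotopyEquiv_supp_len hX (by omega)
  have hle : len X ≤ η := hsgd.2 ⟨X, hX.2, ⟨_, _, hX.1⟩, hIndec_of_not_contractible hc, rfl⟩
  have := isSplitMono_hom_of_not_contractible hc ε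
  have hXsupp := hY.of_isSplitMono ε.hom
  by_contra! h
  have h₁ : ¬(1 < r ∨ s < 1) := fun hi => h.1 (hXsupp 1 hi)
  have h₂ : ¬((η : ℤ) + 2 < r ∨ s < η + 2) := fun hi => h.2 (hXsupp _ hi)
  omega

theorem statement2 (K : Type) [Field K] [IsAlgClosed K]
    (Λ : Type) [Ring Λ] [Algebra K Λ] [FiniteDimensional K Λ]
    (η : ℕ) (hη : 1 ≤ η) (hsgd : IsSGdim Λ η)
    (X : Amb Λ) (hX : InC 1 ((η : ℤ) + 2) X) (hind : Indec X) :
    IsZero (X.X 1) ∨ IsZero (X.X ((η : ℤ) + 2)) :=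
  statement2_general K Λ η hη hsgd X hX hind

end Paper
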